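/- arXiv:1910.12225 — 8 statements merged into one kernel-verified Lean document; each statement's English description precedes it below -/
import Mathlib

section
/- Under the standing hypotheses (dual pair of crossed modules with (g, θ*) a matched pair via the dual actions), let ad*ₓ denote the coadjoint action of g on g*, (ad*ₓξ)(y) = −ξ([x, y]), and let [·,·] denote the Lie bracket of g*. Then for all x ∈ g and ξ, η ∈ g*: ad*ₓ[ξ, η] = [ad*ₓξ, η] + [ξ, ad*ₓη] − ad*₍φ̄(ξ)▷x₎ η + ad*₍φ̄(η)▷x₎ ξ. -/
/-- The coadjoint action of a Lie algebra `L` on its dual: `(coad x γ) y = -γ ⁅x, y⁆`. -/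
noncomputable def coad (k : Type*) [Field k] (L : Type*) [LieRing L] [LieAlgebra k L]
    (x : L) (γ : Module.Dual k L) : Module.Dual k L :=
  -(γ ∘ₗ (LieAlgebra.ad k L x : L →ₗ[k] L))

/-- The dual action of `g` on `θ*` induced by an action `ρ` of `g` on `θ`:
`(dAct ρ x α) u = -α (ρ x u)`. -/
noncomputable def dAct {k g θ : Type*} [Field k] [AddCommGroup g] [Module k g]
    [AddCommGroup θ] [Module k θ] (ρ : g →ₗ[k] θ →ₗ[k] θ)
    (x : g) (α : Module.Dual k θ) : Module.Dual k θ :=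
  -(α ∘ₗ ρ x)

/-- `phibar φ = -φ*`, i.e. `(phibar φ ξ) u = -ξ (φ u)`. -/
noncomputable def phibar {k θ g : Type*} [Field k] [AddCommGroup θ] [Module k θ]
    [AddCommGroup g] [Module k g] (φ : θ →ₗ[k] g) :
    Module.Dual k g →ₗ[k] Module.Dual k θ :=
  -φ.dualMap

/-- `veeLow ρ α u ∈ g*` is `α∨u`, defined by `(α∨u) y = -α (ρ y u)`. -/
noncomputable def veeLow {k g θ : Type*} [Field k] [AddCommGroup g] [Module k g]
    [AddCommGroup θ] [Module k θ] (ρ : g →ₗ[k] θ →ₗ[k] θ)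
    (α : Module.Dual k θ) (u : θ) : Module.Dual k g :=
  -(α ∘ₗ ρ.flip u)

theorem statement4
    (k : Type*) [Field k]
    (g θ : Type*)
    [LieRing g] [LieAlgebra k g] [FiniteDimensional k g]
    [LieRing θ] [LieAlgebra k θ] [FiniteDimensional k θ]
    -- the action of g on θ is a representation acting by derivations
    (ρ : g →ₗ[k] θ →ₗ[k] θ)
    (hρrep : ∀ x y : g, ρ ⁅x, y⁆ = ρ x ∘ₗ ρ y - ρ y ∘ₗ ρ x)
    (hρder : ∀ (x : g) (u v : θ), ρ x ⁅u, v⁆ = ⁅ρ x u, v⁆ + ⁅u, ρ x v⁆)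
    -- (θ, φ, g, ▷) is a Lie algebra crossed module
    (φ : θ →ₗ[k] g)
    (hφhom : ∀ u v : θ, φ ⁅u, v⁆ = ⁅φ u, φ v⁆)
    (hφequi : ∀ (x : g) (u : θ), φ (ρ x u) = ⁅x, φ u⁆)
    (hφpeif : ∀ u v : θ, ρ (φ u) v = ⁅u, v⁆)
    -- θ* is a Lie algebra with bracket Bθd
    (Bθd : Module.Dual k θ →ₗ[k] Module.Dual k θ →ₗ[k] Module.Dual k θ)
    (hBθdalt : ∀ a, Bθd a a = 0)
    (hBθdjac : ∀ a b c, Bθd (Bθd a b) c + Bθd (Bθd b c) a + Bθd (Bθd c a) b = 0)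
    -- g* is a Lie algebra with bracket Bgd
    (Bgd : Module.Dual k g →ₗ[k] Module.Dual k g →ₗ[k] Module.Dual k g)
    (hBgdalt : ∀ a, Bgd a a = 0)
    (hBgdjac : ∀ a b c, Bgd (Bgd a b) c + Bgd (Bgd b c) a + Bgd (Bgd c a) b = 0)
    -- the action σ of θ* on g* is a representation acting by derivations
    (σ : Module.Dual k θ →ₗ[k] Module.Dual k g →ₗ[k] Module.Dual k g)
    (hσrep : ∀ a b, σ (Bθd a b) = σ a ∘ₗ σ b - σ b ∘ₗ σ a)
    (hσder : ∀ a ξ η, σ a (Bgd ξ η) = Bgd (σ a ξ) η + Bgd ξ (σ a η))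
    -- (g*, φ̄, θ*, ▷) is a Lie algebra crossed module, φ̄ = -φ*
    (hφbarhom : ∀ ξ η, phibar φ (Bgd ξ η) = Bθd (phibar φ ξ) (phibar φ η))
    (hφbarequi : ∀ a ξ, phibar φ (σ a ξ) = Bθd a (phibar φ ξ))
    (hφbarpeif : ∀ ξ η, σ (phibar φ ξ) η = Bgd ξ η)
    -- the action τ of θ* on g, dual to the action of θ* on g*
    (τ : Module.Dual k θ →ₗ[k] g →ₗ[k] g)
    (hτrep : ∀ a b, τ (Bθd a b) = τ a ∘ₗ τ b - τ b ∘ₗ τ a)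
    (hτdual : ∀ (ξ : Module.Dual k g) (a : Module.Dual k θ) (x : g),
      ξ (τ a x) = - (σ a ξ) x)
    -- (g, θ*) is a matched pair of Lie algebras for these actions
    (hmp1 : ∀ (x : g) (a b : Module.Dual k θ),
      dAct ρ x (Bθd a b)
        = Bθd (dAct ρ x a) b + Bθd a (dAct ρ x b) + dAct ρ (τ b x) a - dAct ρ (τ a x) b)
    (hmp2 : ∀ (a : Module.Dual k θ) (x y : g),
      τ a ⁅x, y⁆ = ⁅τ a x, y⁆ + ⁅x, τ a y⁆ + τ (dAct ρ y a) x - τ (dAct ρ x a) y)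
 :
    ∀ (x : g) (ξ η : Module.Dual k g),
      coad k g x (Bgd ξ η)
        = Bgd (coad k g x ξ) η + Bgd ξ (coad k g x η)
          - coad k g (τ (phibar φ ξ) x) η + coad k g (τ (phibar φ η) x) ξ := by
  have skew : ∀ a b : Module.Dual k g, Bgd a b = - Bgd b a := by
    intro a b
    have h := hBgdalt (a + b)
    simp only [map_add, LinearMap.add_apply, hBgdalt, zero_add, add_zero] at h
    rw [add_comm] at h
    exact eq_neg_of_add_eq_zero_left h
  have key : ∀ (ζ η' : Module.Dual k g) (z : g), Bgd ζ η' z = - η' (τ (phibar φ ζ) z) := by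
    intro ζ η' z
    rw [← hφbarpeif, hτdual, neg_neg]
  have hc : ∀ (z w : g) (γ : Module.Dual k g), coad k g z γ w = - γ ⁅z, w⁆ := by
    intro z w γ
    simp [coad, LieAlgebra.ad_apply]
  have hd : ∀ (y : g) (ζ : Module.Dual k g), dAct ρ y (phibar φ ζ) = phibar φ (coad k g y ζ) := by
    intro y ζ
    ext u
    simp [dAct, phibar, coad, hφequi, LieAlgebra.ad_apply]
  intro x ξ η
  ext y
  have lhs : coad k g x (Bgd ξ η) y = η (τ (phibar φ ξ) ⁅x, y⁆) := by
    rw [hc, key]; ring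
  rw [lhs, hmp2 (phibar φ ξ) x y, hd, hd]
  simp only [map_add, map_sub, LinearMap.add_apply, LinearMap.sub_apply]
  have e1 : η (τ (phibar φ (coad k g y ξ)) x) = - Bgd (coad k g y ξ) η x := by
    rw [key]; ring
  have e2 : η (τ (phibar φ (coad k g x ξ)) y) = - Bgd (coad k g x ξ) η y := by
    rw [key]; ring
  have A : Bgd (coad k g y ξ) η x = ξ ⁅τ (phibar φ η) x, y⁆ := by
    rw [skew, LinearMap.neg_apply, key η _ x, hc, ← lie_skew, map_neg]
    ring
  have C : Bgd ξ (coad k g x η) y = η ⁅x, τ (phibar φ ξ) y⁆ := by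
    rw [key, hc]; ring
  rw [e1, e2, A, C, hc, hc]
  ring
end

section
/- Under the standing hypotheses (dual pair of crossed modules with (g, θ*) a matched pair via the dual actions), let ad*ₓ denote the coadjoint action of g on g*, (ad*ₓξ)(y) = −ξ([x, y]). Then for all ξ ∈ g* and x, y ∈ g: φ̄(ξ) ▷ [x, y] = [φ̄(ξ) ▷ x, y] + [x, φ̄(ξ) ▷ y] + φ̄(ad*_y ξ) ▷ x − φ̄(ad*ₓξ) ▷ y, where ▷ on the left of each term denotes the action of θ* on g. -/
theorem statement5
    (k : Type*) [Field k]
    (g θ : Type*)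
    [LieRing g] [LieAlgebra k g] [FiniteDimensional k g]
    [LieRing θ] [LieAlgebra k θ] [FiniteDimensional k θ]
    -- the action of g on θ is a representation acting by derivations
    (ρ : g →ₗ[k] θ →ₗ[k] θ)
    (hρrep : ∀ x y : g, ρ ⁅x, y⁆ = ρ x ∘ₗ ρ y - ρ y ∘ₗ ρ x)
    (hρder : ∀ (x : g) (u v : θ), ρ x ⁅u, v⁆ = ⁅ρ x u, v⁆ + ⁅u, ρ x v⁆)
    -- (θ, φ, g, ▷) is a Lie algebra crossed module
    (φ : θ →ₗ[k] g)
    (hφhom : ∀ u v : θ, φ ⁅u, v⁆ = ⁅φ u, φ v⁆)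
    (hφequi : ∀ (x : g) (u : θ), φ (ρ x u) = ⁅x, φ u⁆)
    (hφpeif : ∀ u v : θ, ρ (φ u) v = ⁅u, v⁆)
    -- θ* is a Lie algebra with bracket Bθd
    (Bθd : Module.Dual k θ →ₗ[k] Module.Dual k θ →ₗ[k] Module.Dual k θ)
    (hBθdalt : ∀ a, Bθd a a = 0)
    (hBθdjac : ∀ a b c, Bθd (Bθd a b) c + Bθd (Bθd b c) a + Bθd (Bθd c a) b = 0)
    -- g* is a Lie algebra with bracket Bgd
    (Bgd : Module.Dual k g →ₗ[k] Module.Dual k g →ₗ[k] Module.Dual k g)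
    (hBgdalt : ∀ a, Bgd a a = 0)
    (hBgdjac : ∀ a b c, Bgd (Bgd a b) c + Bgd (Bgd b c) a + Bgd (Bgd c a) b = 0)
    -- the action σ of θ* on g* is a representation acting by derivations
    (σ : Module.Dual k θ →ₗ[k] Module.Dual k g →ₗ[k] Module.Dual k g)
    (hσrep : ∀ a b, σ (Bθd a b) = σ a ∘ₗ σ b - σ b ∘ₗ σ a)
    (hσder : ∀ a ξ η, σ a (Bgd ξ η) = Bgd (σ a ξ) η + Bgd ξ (σ a η))
    -- (g*, φ̄, θ*, ▷) is a Lie algebra crossed module, φ̄ = -φ*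
    (hφbarhom : ∀ ξ η, phibar φ (Bgd ξ η) = Bθd (phibar φ ξ) (phibar φ η))
    (hφbarequi : ∀ a ξ, phibar φ (σ a ξ) = Bθd a (phibar φ ξ))
    (hφbarpeif : ∀ ξ η, σ (phibar φ ξ) η = Bgd ξ η)
    -- the action τ of θ* on g, dual to the action of θ* on g*
    (τ : Module.Dual k θ →ₗ[k] g →ₗ[k] g)
    (hτrep : ∀ a b, τ (Bθd a b) = τ a ∘ₗ τ b - τ b ∘ₗ τ a)
    (hτdual : ∀ (ξ : Module.Dual k g) (a : Module.Dual k θ) (x : g),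
      ξ (τ a x) = - (σ a ξ) x)
    -- (g, θ*) is a matched pair of Lie algebras for these actions
    (hmp1 : ∀ (x : g) (a b : Module.Dual k θ),
      dAct ρ x (Bθd a b)
        = Bθd (dAct ρ x a) b + Bθd a (dAct ρ x b) + dAct ρ (τ b x) a - dAct ρ (τ a x) b)
    (hmp2 : ∀ (a : Module.Dual k θ) (x y : g),
      τ a ⁅x, y⁆ = ⁅τ a x, y⁆ + ⁅x, τ a y⁆ + τ (dAct ρ y a) x - τ (dAct ρ x a) y)
 :
    ∀ (ξ : Module.Dual k g) (x y : g),
      τ (phibar φ ξ) ⁅x, y⁆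
        = ⁅τ (phibar φ ξ) x, y⁆ + ⁅x, τ (phibar φ ξ) y⁆
          + τ (phibar φ (coad k g y ξ)) x - τ (phibar φ (coad k g x ξ)) y := by
  intro ξ x y
  have key : ∀ z : g, dAct ρ z (phibar φ ξ) = phibar φ (coad k g z ξ) := by
    intro z
    ext u
    simp [dAct, phibar, coad, LieAlgebra.ad_apply, hφequi]
  rw [hmp2, key, key]
end

section
/- Under the standing hypotheses (dual pair of crossed modules with (g, θ*) a matched pair via the dual actions), let K = g ⋈ θ* be the double Lie algebra of the matched pair, with bracket [(x, α), (y, β)] = ([x, y] + α ▷ y − β ▷ x, [α, β] + x ▷ β − y ▷ α). Identify K* with g* ⊕ θ via the pairing ⟨(ξ, u), (y, β)⟩ = ξ(y) + β(u), and let ad* denote the coadjoint action of K on K*, (ad*_k γ)(k') = −γ([k, k']). Define the symmetric bilinear form B on g* ⊕ θ by B((ξ₁, u₁), (ξ₂, u₂)) = ξ₁(φ(u₂)) + ξ₂(φ(u₁)). Then B is K-invariant: B(ad*_k γ, γ') + B(γ, ad*_k γ') = 0 for all k ∈ K and γ, γ' ∈ g* ⊕ θ; moreover the subspaces g* ⊕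 0 and 0 ⊕ θ of K* are isotropic for B. -/
theorem statement9
    (k : Type*) [Field k]
    (g θ : Type*)
    [LieRing g] [LieAlgebra k g] [FiniteDimensional k g]
    [LieRing θ] [LieAlgebra k θ] [FiniteDimensional k θ]
    -- the action of g on θ is a representation acting by derivations
    (ρ : g →ₗ[k] θ →ₗ[k] θ)
    (hρrep : ∀ x y : g, ρ ⁅x, y⁆ = ρ x ∘ₗ ρ y - ρ y ∘ₗ ρ x)
    (hρder : ∀ (x : g) (u v : θ), ρ x ⁅u, v⁆ = ⁅ρ x u, v⁆ + ⁅u, ρ x v⁆)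
    -- (θ, φ, g, ▷) is a Lie algebra crossed module
    (φ : θ →ₗ[k] g)
    (hφhom : ∀ u v : θ, φ ⁅u, v⁆ = ⁅φ u, φ v⁆)
    (hφequi : ∀ (x : g) (u : θ), φ (ρ x u) = ⁅x, φ u⁆)
    (hφpeif : ∀ u v : θ, ρ (φ u) v = ⁅u, v⁆)
    -- θ* is a Lie algebra with bracket Bθd
    (Bθd : Module.Dual k θ →ₗ[k] Module.Dual k θ →ₗ[k] Module.Dual k θ)
    (hBθdalt : ∀ a, Bθd a a = 0)
    (hBθdjac : ∀ a b c, Bθd (Bθd a b) c + Bθd (Bθd b c) a + Bθd (Bθd c a) b = 0)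
    -- g* is a Lie algebra with bracket Bgd
    (Bgd : Module.Dual k g →ₗ[k] Module.Dual k g →ₗ[k] Module.Dual k g)
    (hBgdalt : ∀ a, Bgd a a = 0)
    (hBgdjac : ∀ a b c, Bgd (Bgd a b) c + Bgd (Bgd b c) a + Bgd (Bgd c a) b = 0)
    -- the action σ of θ* on g* is a representation acting by derivations
    (σ : Module.Dual k θ →ₗ[k] Module.Dual k g →ₗ[k] Module.Dual k g)
    (hσrep : ∀ a b, σ (Bθd a b) = σ a ∘ₗ σ b - σ b ∘ₗ σ a)
    (hσder : ∀ a ξ η, σ a (Bgd ξ η) = Bgd (σ a ξ) η + Bgd ξ (σ a η))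
    -- (g*, φ̄, θ*, ▷) is a Lie algebra crossed module, φ̄ = -φ*
    (hφbarhom : ∀ ξ η, phibar φ (Bgd ξ η) = Bθd (phibar φ ξ) (phibar φ η))
    (hφbarequi : ∀ a ξ, phibar φ (σ a ξ) = Bθd a (phibar φ ξ))
    (hφbarpeif : ∀ ξ η, σ (phibar φ ξ) η = Bgd ξ η)
    -- the action τ of θ* on g, dual to the action of θ* on g*
    (τ : Module.Dual k θ →ₗ[k] g →ₗ[k] g)
    (hτrep : ∀ a b, τ (Bθd a b) = τ a ∘ₗ τ b - τ b ∘ₗ τ a)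
    (hτdual : ∀ (ξ : Module.Dual k g) (a : Module.Dual k θ) (x : g),
      ξ (τ a x) = - (σ a ξ) x)
    -- (g, θ*) is a matched pair of Lie algebras for these actions
    (hmp1 : ∀ (x : g) (a b : Module.Dual k θ),
      dAct ρ x (Bθd a b)
        = Bθd (dAct ρ x a) b + Bθd a (dAct ρ x b) + dAct ρ (τ b x) a - dAct ρ (τ a x) b)
    (hmp2 : ∀ (a : Module.Dual k θ) (x y : g),
      τ a ⁅x, y⁆ = ⁅τ a x, y⁆ + ⁅x, τ a y⁆ + τ (dAct ρ y a) x - τ (dAct ρ x a) y)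
 :
    -- the double Lie algebra K = g ⋈ θ*
    let Kbr : g × Module.Dual k θ → g × Module.Dual k θ → g × Module.Dual k θ :=
      fun p q => (⁅p.1, q.1⁆ + τ p.2 q.1 - τ q.2 p.1,
                  Bθd p.2 q.2 + dAct ρ p.1 q.2 - dAct ρ q.1 p.2)
    -- the pairing identifying K* with g* ⊕ θ
    let pr : Module.Dual k g × θ → g × Module.Dual k θ → k :=
      fun γ p => γ.1 p.1 + p.2 γ.2
    -- the symmetric bilinear form B on g* ⊕ θ
    let B : Module.Dual k g × θ → Module.Dual k g × θ → k :=
      fun γ δ => γ.1 (φ δ.2) + δ.1 (φ γ.2)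
    -- for the coadjoint action of K on K* ...
    ∀ coadK : g × Module.Dual k θ → Module.Dual k g × θ → Module.Dual k g × θ,
      (∀ (p : g × Module.Dual k θ) (γ : Module.Dual k g × θ) (q : g × Module.Dual k θ),
        pr (coadK p γ) q = - pr γ (Kbr p q)) →
      -- ... B is K-invariant ...
      (∀ (p : g × Module.Dual k θ) (γ γ' : Module.Dual k g × θ),
        B (coadK p γ) γ' + B γ (coadK p γ') = 0)
      -- ... and g* ⊕ 0 and 0 ⊕ θ are isotropic for B
      ∧ (∀ ξ η : Module.Dual k g, B (ξ, 0) (η, 0) = 0)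
      ∧ (∀ u v : θ, B (0, u) (0, v) = 0) := by

  intro Kbr pr B coadK h
  refine ⟨?_, ?_, ?_⟩
  · rintro ⟨x, a⟩ ⟨ξ, u⟩ ⟨η, v⟩
    have h1 : ∀ (p : g × Module.Dual k θ) (γ : Module.Dual k g × θ) (y : g),
        (coadK p γ).1 y = - pr γ (Kbr p (y, 0)) := by
      intro p γ y
      have := h p γ (y, 0)
      simpa [pr] using this
    have h2 : ∀ (p : g × Module.Dual k θ) (γ : Module.Dual k g × θ) (β : Module.Dual k θ),
        β (coadK p γ).2 = - pr γ (Kbr p (0, β)) := by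
      intro p γ β
      have := h p γ (0, β)
      simpa [pr] using this
    have hB : ∀ (p : g × Module.Dual k θ) (γ γ' : Module.Dual k g × θ),
        B (coadK p γ) γ' = - pr γ (Kbr p (φ γ'.2, 0)) - pr γ (Kbr p (0, γ'.1 ∘ₗ φ)) := by
      intro p γ γ'
      have e2 : γ'.1 (φ (coadK p γ).2) = (γ'.1 ∘ₗ φ) (coadK p γ).2 := rfl
      simp only [B, h1 p γ (φ γ'.2), e2, h2 p γ (γ'.1 ∘ₗ φ)]
      ring
    have hBsymm : ∀ γ δ : Module.Dual k g × θ, B γ δ = B δ γ := by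
      intro γ δ; simp only [B]; ring
    rw [hB, hBsymm, hB]
    -- scalar facts
    have e1 : ξ (φ (ρ x v)) = ξ ⁅x, φ v⁆ := congrArg ξ (hφequi x v)
    have e2 : η (φ (ρ x u)) = η ⁅x, φ u⁆ := congrArg η (hφequi x u)
    have e3 : ξ (τ a (φ v)) = - (σ a ξ) (φ v) := hτdual ξ a (φ v)
    have e4 : η (τ a (φ u)) = - (σ a η) (φ u) := hτdual η a (φ u)
    have e5 : a (ρ (φ v) u) = a ⁅v, u⁆ := congrArg a (hφpeif v u)
    have e6 : a (ρ (φ u) v) = a ⁅u, v⁆ := congrArg a (hφpeif u v)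
    have e7 : a ⁅v, u⁆ = - a ⁅u, v⁆ := by
      rw [← lie_skew v u, map_neg]
    have e8 : Bgd ξ η x = - Bgd η ξ x := by
      have h0 := congrFun (congrArg DFunLike.coe (hBgdalt (ξ + η))) x
      simp only [map_add, LinearMap.add_apply, hBgdalt, LinearMap.zero_apply, zero_add,
        add_zero] at h0
      linear_combination h0

    simp only [Kbr, pr, dAct, phibar, LinearMap.coe_comp, Function.comp_apply, map_zero,
      lie_zero, zero_lie, map_add, map_sub, map_neg, LinearMap.add_apply, LinearMap.sub_apply,
      LinearMap.neg_apply, LinearMap.zero_apply, add_zero, zero_add, sub_zero, zero_sub, neg_neg]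
    have hc1 : (η ∘ₗ φ) = -(phibar φ η) := by ext w; simp [phibar]
    have hc2 : (ξ ∘ₗ φ) = -(phibar φ ξ) := by ext w; simp [phibar]
    have e9 : ξ ((τ (η ∘ₗ φ)) x) = Bgd η ξ x := by
      rw [hc1, map_neg, LinearMap.neg_apply, map_neg, hτdual, hφbarpeif, neg_neg]
    have e10 : η ((τ (ξ ∘ₗ φ)) x) = Bgd ξ η x := by
      rw [hc2, map_neg, LinearMap.neg_apply, map_neg, hτdual, hφbarpeif, neg_neg]
    have e11 : (Bθd a (η ∘ₗ φ)) u = (σ a η) (φ u) := by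
      rw [hc1, map_neg, LinearMap.neg_apply, ← hφbarequi]
      simp [phibar]
    have e12 : (Bθd a (ξ ∘ₗ φ)) v = (σ a ξ) (φ v) := by
      rw [hc2, map_neg, LinearMap.neg_apply, ← hφbarequi]
      simp [phibar]
    linear_combination e1 + e2 - e3 - e4 - e5 - e6 - e7 + e8 + e9 + e10 - e11 - e12
  · intro ξ η
    simp [B]
  · intro u v
    simp [B]
end

section
/- Under the standing hypotheses (dual pair of crossed modules with (g, θ*) a matched pair via the dual actions), for all u ∈ θ, α ∈ θ* and ξ ∈ g*: (ad*_u α) ▷ ξ + [ξ, α∨u] = 0 in g*, where (ad*_u α)(v) = −α([u, v]) is the coadjoint action of θ on θ*, ▷ denotes the action of θ* on g*, [·,·] is the Lie bracket of g*, and α∨u ∈ g* is defined by (α∨u)(y) = −α(y ▷ u). -/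
theorem statement10
    (k : Type*) [Field k]
    (g θ : Type*)
    [LieRing g] [LieAlgebra k g] [FiniteDimensional k g]
    [LieRing θ] [LieAlgebra k θ] [FiniteDimensional k θ]
    -- the action of g on θ is a representation acting by derivations
    (ρ : g →ₗ[k] θ →ₗ[k] θ)
    (hρrep : ∀ x y : g, ρ ⁅x, y⁆ = ρ x ∘ₗ ρ y - ρ y ∘ₗ ρ x)
    (hρder : ∀ (x : g) (u v : θ), ρ x ⁅u, v⁆ = ⁅ρ x u, v⁆ + ⁅u, ρ x v⁆)
    -- (θ, φ, g, ▷) is a Lie algebra crossed module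
    (φ : θ →ₗ[k] g)
    (hφhom : ∀ u v : θ, φ ⁅u, v⁆ = ⁅φ u, φ v⁆)
    (hφequi : ∀ (x : g) (u : θ), φ (ρ x u) = ⁅x, φ u⁆)
    (hφpeif : ∀ u v : θ, ρ (φ u) v = ⁅u, v⁆)
    -- θ* is a Lie algebra with bracket Bθd
    (Bθd : Module.Dual k θ →ₗ[k] Module.Dual k θ →ₗ[k] Module.Dual k θ)
    (hBθdalt : ∀ a, Bθd a a = 0)
    (hBθdjac : ∀ a b c, Bθd (Bθd a b) c + Bθd (Bθd b c) a + Bθd (Bθd c a) b = 0)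
    -- g* is a Lie algebra with bracket Bgd
    (Bgd : Module.Dual k g →ₗ[k] Module.Dual k g →ₗ[k] Module.Dual k g)
    (hBgdalt : ∀ a, Bgd a a = 0)
    (hBgdjac : ∀ a b c, Bgd (Bgd a b) c + Bgd (Bgd b c) a + Bgd (Bgd c a) b = 0)
    -- the action σ of θ* on g* is a representation acting by derivations
    (σ : Module.Dual k θ →ₗ[k] Module.Dual k g →ₗ[k] Module.Dual k g)
    (hσrep : ∀ a b, σ (Bθd a b) = σ a ∘ₗ σ b - σ b ∘ₗ σ a)
    (hσder : ∀ a ξ η, σ a (Bgd ξ η) = Bgd (σ a ξ) η + Bgd ξ (σ a η))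
    -- (g*, φ̄, θ*, ▷) is a Lie algebra crossed module, φ̄ = -φ*
    (hφbarhom : ∀ ξ η, phibar φ (Bgd ξ η) = Bθd (phibar φ ξ) (phibar φ η))
    (hφbarequi : ∀ a ξ, phibar φ (σ a ξ) = Bθd a (phibar φ ξ))
    (hφbarpeif : ∀ ξ η, σ (phibar φ ξ) η = Bgd ξ η)
    -- the action τ of θ* on g, dual to the action of θ* on g*
    (τ : Module.Dual k θ →ₗ[k] g →ₗ[k] g)
    (hτrep : ∀ a b, τ (Bθd a b) = τ a ∘ₗ τ b - τ b ∘ₗ τ a)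
    (hτdual : ∀ (ξ : Module.Dual k g) (a : Module.Dual k θ) (x : g),
      ξ (τ a x) = - (σ a ξ) x)
    -- (g, θ*) is a matched pair of Lie algebras for these actions
    (hmp1 : ∀ (x : g) (a b : Module.Dual k θ),
      dAct ρ x (Bθd a b)
        = Bθd (dAct ρ x a) b + Bθd a (dAct ρ x b) + dAct ρ (τ b x) a - dAct ρ (τ a x) b)
    (hmp2 : ∀ (a : Module.Dual k θ) (x y : g),
      τ a ⁅x, y⁆ = ⁅τ a x, y⁆ + ⁅x, τ a y⁆ + τ (dAct ρ y a) x - τ (dAct ρ x a) y)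
 :
    ∀ (u : θ) (a : Module.Dual k θ) (ξ : Module.Dual k g),
      σ (coad k θ u a) ξ + Bgd ξ (veeLow ρ a u) = 0 := by
  intro u a ξ
  have hkey : coad k θ u a = phibar φ (veeLow ρ a u) := by
    ext v
    simp only [coad, phibar, veeLow, LinearMap.neg_apply, LinearMap.dualMap_apply,
      LinearMap.coe_comp, Function.comp_apply, LieAlgebra.ad_apply, LinearMap.flip_apply,
      hφpeif, neg_neg]
    rw [← lie_skew, map_neg, neg_neg]
  have hanti : Bgd ξ (veeLow ρ a u) = -Bgd (veeLow ρ a u) ξ := by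
    have h := hBgdalt (ξ + veeLow ρ a u)
    simp only [map_add, LinearMap.add_apply, hBgdalt] at h
    rw [zero_add, add_zero] at h
    exact eq_neg_of_add_eq_zero_left ((add_comm _ _).trans h)
  rw [hkey, hφbarpeif, hanti]
  abel
end

section
/- Under the standing hypotheses (dual pair of crossed modules with (g, θ*) a matched pair via the dual actions), for all x ∈ g and ξ ∈ g*: φ(x∨ξ) = φ̄(ξ) ▷ x, where x∨ξ ∈ θ is the unique element satisfying α(x∨ξ) = ξ(α ▷ x) for all α ∈ θ*, and φ̄(ξ) ▷ x denotes the action of θ* on g. -/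
theorem statement11
    (k : Type*) [Field k]
    (g θ : Type*)
    [LieRing g] [LieAlgebra k g] [FiniteDimensional k g]
    [LieRing θ] [LieAlgebra k θ] [FiniteDimensional k θ]
    -- the action of g on θ is a representation acting by derivations
    (ρ : g →ₗ[k] θ →ₗ[k] θ)
    (hρrep : ∀ x y : g, ρ ⁅x, y⁆ = ρ x ∘ₗ ρ y - ρ y ∘ₗ ρ x)
    (hρder : ∀ (x : g) (u v : θ), ρ x ⁅u, v⁆ = ⁅ρ x u, v⁆ + ⁅u, ρ x v⁆)
    -- (θ, φ, g, ▷) is a Lie algebra crossed module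
    (φ : θ →ₗ[k] g)
    (hφhom : ∀ u v : θ, φ ⁅u, v⁆ = ⁅φ u, φ v⁆)
    (hφequi : ∀ (x : g) (u : θ), φ (ρ x u) = ⁅x, φ u⁆)
    (hφpeif : ∀ u v : θ, ρ (φ u) v = ⁅u, v⁆)
    -- θ* is a Lie algebra with bracket Bθd
    (Bθd : Module.Dual k θ →ₗ[k] Module.Dual k θ →ₗ[k] Module.Dual k θ)
    (hBθdalt : ∀ a, Bθd a a = 0)
    (hBθdjac : ∀ a b c, Bθd (Bθd a b) c + Bθd (Bθd b c) a + Bθd (Bθd c a) b = 0)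
    -- g* is a Lie algebra with bracket Bgd
    (Bgd : Module.Dual k g →ₗ[k] Module.Dual k g →ₗ[k] Module.Dual k g)
    (hBgdalt : ∀ a, Bgd a a = 0)
    (hBgdjac : ∀ a b c, Bgd (Bgd a b) c + Bgd (Bgd b c) a + Bgd (Bgd c a) b = 0)
    -- the action σ of θ* on g* is a representation acting by derivations
    (σ : Module.Dual k θ →ₗ[k] Module.Dual k g →ₗ[k] Module.Dual k g)
    (hσrep : ∀ a b, σ (Bθd a b) = σ a ∘ₗ σ b - σ b ∘ₗ σ a)
    (hσder : ∀ a ξ η, σ a (Bgd ξ η) = Bgd (σ a ξ) η + Bgd ξ (σ a η))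
    -- (g*, φ̄, θ*, ▷) is a Lie algebra crossed module, φ̄ = -φ*
    (hφbarhom : ∀ ξ η, phibar φ (Bgd ξ η) = Bθd (phibar φ ξ) (phibar φ η))
    (hφbarequi : ∀ a ξ, phibar φ (σ a ξ) = Bθd a (phibar φ ξ))
    (hφbarpeif : ∀ ξ η, σ (phibar φ ξ) η = Bgd ξ η)
    -- the action τ of θ* on g, dual to the action of θ* on g*
    (τ : Module.Dual k θ →ₗ[k] g →ₗ[k] g)
    (hτrep : ∀ a b, τ (Bθd a b) = τ a ∘ₗ τ b - τ b ∘ₗ τ a)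
    (hτdual : ∀ (ξ : Module.Dual k g) (a : Module.Dual k θ) (x : g),
      ξ (τ a x) = - (σ a ξ) x)
    -- (g, θ*) is a matched pair of Lie algebras for these actions
    (hmp1 : ∀ (x : g) (a b : Module.Dual k θ),
      dAct ρ x (Bθd a b)
        = Bθd (dAct ρ x a) b + Bθd a (dAct ρ x b) + dAct ρ (τ b x) a - dAct ρ (τ a x) b)
    (hmp2 : ∀ (a : Module.Dual k θ) (x y : g),
      τ a ⁅x, y⁆ = ⁅τ a x, y⁆ + ⁅x, τ a y⁆ + τ (dAct ρ y a) x - τ (dAct ρ x a) y)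
    -- x∨ξ ∈ θ, the unique element with α (x∨ξ) = ξ (α ▷ x) for all α ∈ θ*
    (vee : g → Module.Dual k g → θ)
    (hvee : ∀ (x : g) (ξ : Module.Dual k g) (a : Module.Dual k θ),
      a (vee x ξ) = ξ (τ a x))
 :
    ∀ (x : g) (ξ : Module.Dual k g), φ (vee x ξ) = τ (phibar φ ξ) x := by
  intro x ξ
  have hskew : ∀ a b : Module.Dual k g, Bgd a b = -Bgd b a := by
    intro a b
    have h := hBgdalt (a + b)
    simp only [map_add, LinearMap.add_apply, hBgdalt, zero_add, add_zero] at h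
    exact eq_neg_of_add_eq_zero_left (by rw [add_comm] at h; exact h)
  rw [← sub_eq_zero, ← Module.forall_dual_apply_eq_zero_iff k]
  intro η
  have h1 : η (φ (vee x ξ)) = (Bgd η ξ) x := by
    have : η (φ (vee x ξ)) = -((phibar φ η) (vee x ξ)) := by
      simp [phibar, LinearMap.dualMap_apply]
    rw [this, hvee, hτdual, hφbarpeif]
    ring
  have h2 : η (τ (phibar φ ξ) x) = (Bgd η ξ) x := by
    rw [hτdual, hφbarpeif, hskew]
    simp
  simp [h1, h2]
end

section
/- Under the standing hypotheses (dual pair of crossed modules with (g, θ*) a matched pair via the dual actions), for all x, y ∈ g and ξ ∈ g*: x∨(ad*_y ξ) + x ▷ (y∨ξ) − [x, y]∨ξ − y∨(ad*ₓξ) − y ▷ (x∨ξ) = 0 in θ, where (ad*ₓξ)(z) = −ξ([x, z]) is the coadjoint action of g on g*, x∨ξ ∈ θ is the unique element with α(x∨ξ) = ξ(α ▷ x) for all α ∈ θ*, and ▷ denotes the action of g on θ. -/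
theorem statement12
    (k : Type*) [Field k]
    (g θ : Type*)
    [LieRing g] [LieAlgebra k g] [FiniteDimensional k g]
    [LieRing θ] [LieAlgebra k θ] [FiniteDimensional k θ]
    -- the action of g on θ is a representation acting by derivations
    (ρ : g →ₗ[k] θ →ₗ[k] θ)
    (hρrep : ∀ x y : g, ρ ⁅x, y⁆ = ρ x ∘ₗ ρ y - ρ y ∘ₗ ρ x)
    (hρder : ∀ (x : g) (u v : θ), ρ x ⁅u, v⁆ = ⁅ρ x u, v⁆ + ⁅u, ρ x v⁆)
    -- (θ, φ, g, ▷) is a Lie algebra crossed module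
    (φ : θ →ₗ[k] g)
    (hφhom : ∀ u v : θ, φ ⁅u, v⁆ = ⁅φ u, φ v⁆)
    (hφequi : ∀ (x : g) (u : θ), φ (ρ x u) = ⁅x, φ u⁆)
    (hφpeif : ∀ u v : θ, ρ (φ u) v = ⁅u, v⁆)
    -- θ* is a Lie algebra with bracket Bθd
    (Bθd : Module.Dual k θ →ₗ[k] Module.Dual k θ →ₗ[k] Module.Dual k θ)
    (hBθdalt : ∀ a, Bθd a a = 0)
    (hBθdjac : ∀ a b c, Bθd (Bθd a b) c + Bθd (Bθd b c) a + Bθd (Bθd c a) b = 0)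
    -- g* is a Lie algebra with bracket Bgd
    (Bgd : Module.Dual k g →ₗ[k] Module.Dual k g →ₗ[k] Module.Dual k g)
    (hBgdalt : ∀ a, Bgd a a = 0)
    (hBgdjac : ∀ a b c, Bgd (Bgd a b) c + Bgd (Bgd b c) a + Bgd (Bgd c a) b = 0)
    -- the action σ of θ* on g* is a representation acting by derivations
    (σ : Module.Dual k θ →ₗ[k] Module.Dual k g →ₗ[k] Module.Dual k g)
    (hσrep : ∀ a b, σ (Bθd a b) = σ a ∘ₗ σ b - σ b ∘ₗ σ a)
    (hσder : ∀ a ξ η, σ a (Bgd ξ η) = Bgd (σ a ξ) η + Bgd ξ (σ a η))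
    -- (g*, φ̄, θ*, ▷) is a Lie algebra crossed module, φ̄ = -φ*
    (hφbarhom : ∀ ξ η, phibar φ (Bgd ξ η) = Bθd (phibar φ ξ) (phibar φ η))
    (hφbarequi : ∀ a ξ, phibar φ (σ a ξ) = Bθd a (phibar φ ξ))
    (hφbarpeif : ∀ ξ η, σ (phibar φ ξ) η = Bgd ξ η)
    -- the action τ of θ* on g, dual to the action of θ* on g*
    (τ : Module.Dual k θ →ₗ[k] g →ₗ[k] g)
    (hτrep : ∀ a b, τ (Bθd a b) = τ a ∘ₗ τ b - τ b ∘ₗ τ a)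
    (hτdual : ∀ (ξ : Module.Dual k g) (a : Module.Dual k θ) (x : g),
      ξ (τ a x) = - (σ a ξ) x)
    -- (g, θ*) is a matched pair of Lie algebras for these actions
    (hmp1 : ∀ (x : g) (a b : Module.Dual k θ),
      dAct ρ x (Bθd a b)
        = Bθd (dAct ρ x a) b + Bθd a (dAct ρ x b) + dAct ρ (τ b x) a - dAct ρ (τ a x) b)
    (hmp2 : ∀ (a : Module.Dual k θ) (x y : g),
      τ a ⁅x, y⁆ = ⁅τ a x, y⁆ + ⁅x, τ a y⁆ + τ (dAct ρ y a) x - τ (dAct ρ x a) y)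
    -- x∨ξ ∈ θ, the unique element with α (x∨ξ) = ξ (α ▷ x) for all α ∈ θ*
    (vee : g → Module.Dual k g → θ)
    (hvee : ∀ (x : g) (ξ : Module.Dual k g) (a : Module.Dual k θ),
      a (vee x ξ) = ξ (τ a x))
 :
    ∀ (x y : g) (ξ : Module.Dual k g),
      vee x (coad k g y ξ) + ρ x (vee y ξ) - vee ⁅x, y⁆ ξ
        - vee y (coad k g x ξ) - ρ y (vee x ξ) = 0 := by
  intro x y ξ
  apply (Module.forall_dual_apply_eq_zero_iff k _).mp
  intro a
  have h1 : ∀ (z : g) (u : θ), a (ρ z u) = -(dAct ρ z a) u := by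
    intro z u; simp [dAct]
  simp only [map_add, map_sub, h1, hvee, coad, dAct, LinearMap.neg_apply,
    LinearMap.comp_apply, LieAlgebra.ad_apply, hmp2, map_neg]
  rw [← lie_skew y ((τ a) x), map_neg]
  ring
end

section
/- Under the standing hypotheses (dual pair of crossed modules with (g, θ*) a matched pair via the dual actions), for all x ∈ g and ξ, η ∈ g*: x∨[ξ, η] + (φ̄(ξ) ▷ x)∨η − (φ̄(η) ▷ x)∨ξ = 0 in θ, where [ξ, η] is the Lie bracket of g*, x∨ξ ∈ θ is the unique element with α(x∨ξ) = ξ(α ▷ x) for all α ∈ θ*, and φ̄(ξ) ▷ x denotes the action of θ* on g. -/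
theorem statement16
    (k : Type*) [Field k]
    (g θ : Type*)
    [LieRing g] [LieAlgebra k g] [FiniteDimensional k g]
    [LieRing θ] [LieAlgebra k θ] [FiniteDimensional k θ]
    -- the action of g on θ is a representation acting by derivations
    (ρ : g →ₗ[k] θ →ₗ[k] θ)
    (hρrep : ∀ x y : g, ρ ⁅x, y⁆ = ρ x ∘ₗ ρ y - ρ y ∘ₗ ρ x)
    (hρder : ∀ (x : g) (u v : θ), ρ x ⁅u, v⁆ = ⁅ρ x u, v⁆ + ⁅u, ρ x v⁆)
    -- (θ, φ, g, ▷) is a Lie algebra crossed module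
    (φ : θ →ₗ[k] g)
    (hφhom : ∀ u v : θ, φ ⁅u, v⁆ = ⁅φ u, φ v⁆)
    (hφequi : ∀ (x : g) (u : θ), φ (ρ x u) = ⁅x, φ u⁆)
    (hφpeif : ∀ u v : θ, ρ (φ u) v = ⁅u, v⁆)
    -- θ* is a Lie algebra with bracket Bθd
    (Bθd : Module.Dual k θ →ₗ[k] Module.Dual k θ →ₗ[k] Module.Dual k θ)
    (hBθdalt : ∀ a, Bθd a a = 0)
    (hBθdjac : ∀ a b c, Bθd (Bθd a b) c + Bθd (Bθd b c) a + Bθd (Bθd c a) b = 0)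
    -- g* is a Lie algebra with bracket Bgd
    (Bgd : Module.Dual k g →ₗ[k] Module.Dual k g →ₗ[k] Module.Dual k g)
    (hBgdalt : ∀ a, Bgd a a = 0)
    (hBgdjac : ∀ a b c, Bgd (Bgd a b) c + Bgd (Bgd b c) a + Bgd (Bgd c a) b = 0)
    -- the action σ of θ* on g* is a representation acting by derivations
    (σ : Module.Dual k θ →ₗ[k] Module.Dual k g →ₗ[k] Module.Dual k g)
    (hσrep : ∀ a b, σ (Bθd a b) = σ a ∘ₗ σ b - σ b ∘ₗ σ a)
    (hσder : ∀ a ξ η, σ a (Bgd ξ η) = Bgd (σ a ξ) η + Bgd ξ (σ a η))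
    -- (g*, φ̄, θ*, ▷) is a Lie algebra crossed module, φ̄ = -φ*
    (hφbarhom : ∀ ξ η, phibar φ (Bgd ξ η) = Bθd (phibar φ ξ) (phibar φ η))
    (hφbarequi : ∀ a ξ, phibar φ (σ a ξ) = Bθd a (phibar φ ξ))
    (hφbarpeif : ∀ ξ η, σ (phibar φ ξ) η = Bgd ξ η)
    -- the action τ of θ* on g, dual to the action of θ* on g*
    (τ : Module.Dual k θ →ₗ[k] g →ₗ[k] g)
    (hτrep : ∀ a b, τ (Bθd a b) = τ a ∘ₗ τ b - τ b ∘ₗ τ a)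
    (hτdual : ∀ (ξ : Module.Dual k g) (a : Module.Dual k θ) (x : g),
      ξ (τ a x) = - (σ a ξ) x)
    -- (g, θ*) is a matched pair of Lie algebras for these actions
    (hmp1 : ∀ (x : g) (a b : Module.Dual k θ),
      dAct ρ x (Bθd a b)
        = Bθd (dAct ρ x a) b + Bθd a (dAct ρ x b) + dAct ρ (τ b x) a - dAct ρ (τ a x) b)
    (hmp2 : ∀ (a : Module.Dual k θ) (x y : g),
      τ a ⁅x, y⁆ = ⁅τ a x, y⁆ + ⁅x, τ a y⁆ + τ (dAct ρ y a) x - τ (dAct ρ x a) y)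
    -- x∨ξ ∈ θ, the unique element with α (x∨ξ) = ξ (α ▷ x) for all α ∈ θ*
    (vee : g → Module.Dual k g → θ)
    (hvee : ∀ (x : g) (ξ : Module.Dual k g) (a : Module.Dual k θ),
      a (vee x ξ) = ξ (τ a x))
 :
    ∀ (x : g) (ξ η : Module.Dual k g),
      vee x (Bgd ξ η) + vee (τ (phibar φ ξ) x) η - vee (τ (phibar φ η) x) ξ = 0 := by
  intro x ξ η
  rw [← Module.forall_dual_apply_eq_zero_iff k]
  intro a
  have skew : ∀ p q, Bgd p q = - Bgd q p := fun p q => by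
    have h := hBgdalt (p + q)
    simp only [map_add, LinearMap.add_apply, hBgdalt, zero_add, add_zero] at h
    exact eq_neg_of_add_eq_zero_left (by rw [add_comm]; exact h)
  simp only [map_add, map_sub, hvee, hτdual, hσder, hφbarpeif, LinearMap.add_apply,
    LinearMap.neg_apply, Pi.neg_apply, neg_neg]
  rw [skew (σ a ξ) η]
  simp only [LinearMap.neg_apply]
  abel
end

section
/- Under the standing hypotheses (dual pair of crossed modules with (g, θ*) a matched pair via the dual actions), for all x ∈ g, ξ ∈ g*, u ∈ θ: (φ̄(ξ) ▷ x) ▷ u + [u, x∨ξ] = 0 in θ, where [·,·] is the Lie bracket of θ, x∨ξ ∈ θ is the unique element with α(x∨ξ) = ξ(α ▷ x) for all α ∈ θ*, φ̄(ξ) ▷ x denotes the action of θ* on g, and the outer ▷ is the action of g on θ. -/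
theorem statement18
    (k : Type*) [Field k]
    (g θ : Type*)
    [LieRing g] [LieAlgebra k g] [FiniteDimensional k g]
    [LieRing θ] [LieAlgebra k θ] [FiniteDimensional k θ]
    -- the action of g on θ is a representation acting by derivations
    (ρ : g →ₗ[k] θ →ₗ[k] θ)
    (hρrep : ∀ x y : g, ρ ⁅x, y⁆ = ρ x ∘ₗ ρ y - ρ y ∘ₗ ρ x)
    (hρder : ∀ (x : g) (u v : θ), ρ x ⁅u, v⁆ = ⁅ρ x u, v⁆ + ⁅u, ρ x v⁆)
    -- (θ, φ, g, ▷) is a Lie algebra crossed module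
    (φ : θ →ₗ[k] g)
    (hφhom : ∀ u v : θ, φ ⁅u, v⁆ = ⁅φ u, φ v⁆)
    (hφequi : ∀ (x : g) (u : θ), φ (ρ x u) = ⁅x, φ u⁆)
    (hφpeif : ∀ u v : θ, ρ (φ u) v = ⁅u, v⁆)
    -- θ* is a Lie algebra with bracket Bθd
    (Bθd : Module.Dual k θ →ₗ[k] Module.Dual k θ →ₗ[k] Module.Dual k θ)
    (hBθdalt : ∀ a, Bθd a a = 0)
    (hBθdjac : ∀ a b c, Bθd (Bθd a b) c + Bθd (Bθd b c) a + Bθd (Bθd c a) b = 0)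
    -- g* is a Lie algebra with bracket Bgd
    (Bgd : Module.Dual k g →ₗ[k] Module.Dual k g →ₗ[k] Module.Dual k g)
    (hBgdalt : ∀ a, Bgd a a = 0)
    (hBgdjac : ∀ a b c, Bgd (Bgd a b) c + Bgd (Bgd b c) a + Bgd (Bgd c a) b = 0)
    -- the action σ of θ* on g* is a representation acting by derivations
    (σ : Module.Dual k θ →ₗ[k] Module.Dual k g →ₗ[k] Module.Dual k g)
    (hσrep : ∀ a b, σ (Bθd a b) = σ a ∘ₗ σ b - σ b ∘ₗ σ a)
    (hσder : ∀ a ξ η, σ a (Bgd ξ η) = Bgd (σ a ξ) η + Bgd ξ (σ a η))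
    -- (g*, φ̄, θ*, ▷) is a Lie algebra crossed module, φ̄ = -φ*
    (hφbarhom : ∀ ξ η, phibar φ (Bgd ξ η) = Bθd (phibar φ ξ) (phibar φ η))
    (hφbarequi : ∀ a ξ, phibar φ (σ a ξ) = Bθd a (phibar φ ξ))
    (hφbarpeif : ∀ ξ η, σ (phibar φ ξ) η = Bgd ξ η)
    -- the action τ of θ* on g, dual to the action of θ* on g*
    (τ : Module.Dual k θ →ₗ[k] g →ₗ[k] g)
    (hτrep : ∀ a b, τ (Bθd a b) = τ a ∘ₗ τ b - τ b ∘ₗ τ a)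
    (hτdual : ∀ (ξ : Module.Dual k g) (a : Module.Dual k θ) (x : g),
      ξ (τ a x) = - (σ a ξ) x)
    -- (g, θ*) is a matched pair of Lie algebras for these actions
    (hmp1 : ∀ (x : g) (a b : Module.Dual k θ),
      dAct ρ x (Bθd a b)
        = Bθd (dAct ρ x a) b + Bθd a (dAct ρ x b) + dAct ρ (τ b x) a - dAct ρ (τ a x) b)
    (hmp2 : ∀ (a : Module.Dual k θ) (x y : g),
      τ a ⁅x, y⁆ = ⁅τ a x, y⁆ + ⁅x, τ a y⁆ + τ (dAct ρ y a) x - τ (dAct ρ x a) y)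
    -- x∨ξ ∈ θ, the unique element with α (x∨ξ) = ξ (α ▷ x) for all α ∈ θ*
    (vee : g → Module.Dual k g → θ)
    (hvee : ∀ (x : g) (ξ : Module.Dual k g) (a : Module.Dual k θ),
      a (vee x ξ) = ξ (τ a x))
 :
    ∀ (x : g) (ξ : Module.Dual k g) (u : θ),
      ρ (τ (phibar φ ξ) x) u + ⁅u, vee x ξ⁆ = 0 := by

  intro x ξ u
  rw [← Module.forall_dual_apply_eq_zero_iff k]
  intro a
  -- scalar form of the equivariance of phibar
  have h2 : ∀ (a' : Module.Dual k θ) (η : Module.Dual k g) (v : θ),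
      Bθd a' (phibar φ η) v = η (τ a' (φ v)) := by
    intro a' η v
    rw [hτdual, ← hφbarequi]
    simp [phibar]
  -- dAct ρ x ∘ phibar = phibar ∘ coad
  have h3 : dAct ρ x (phibar φ ξ) = phibar φ (coad k g x ξ) := by
    ext v
    simp [dAct, phibar, coad, hφequi]
  have H := congrArg (fun f => f u) (hmp1 x a (phibar φ ξ))
  simp only [LinearMap.add_apply, LinearMap.sub_apply] at H
  -- rewrite each term of H into scalar form
  have T1 : dAct ρ x (Bθd a (phibar φ ξ)) u = -ξ (τ a ⁅x, φ u⁆) := by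
    have : dAct ρ x (Bθd a (phibar φ ξ)) u = -(Bθd a (phibar φ ξ) (ρ x u)) := by
      simp [dAct]
    rw [this, h2, hφequi]
  have T2 : Bθd (dAct ρ x a) (phibar φ ξ) u = ξ (τ (dAct ρ x a) (φ u)) := h2 _ _ _
  have T3 : Bθd a (dAct ρ x (phibar φ ξ)) u = -ξ ⁅x, τ a (φ u)⁆ := by
    rw [h3, h2]
    simp [coad]
  have T4 : dAct ρ (τ a x) (phibar φ ξ) u = ξ ⁅τ a x, φ u⁆ := by
    simp [dAct, phibar, hφequi]
  have T5 : dAct ρ (τ (phibar φ ξ) x) a u = -(a (ρ (τ (phibar φ ξ) x) u)) := by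
    simp [dAct]
  rw [T1, T2, T3, T4, T5] at H
  have M := congrArg ξ (hmp2 a x (φ u))
  simp only [map_add, map_sub] at M
  have E : a ⁅u, vee x ξ⁆ = -ξ (τ (dAct ρ (φ u) a) x) := by
    rw [← hvee x ξ (dAct ρ (φ u) a)]
    simp [dAct, hφpeif]
  simp only [map_add]
  rw [E]
  linear_combination H + M
end
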